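/- Let ((R^•,D^•),C,Ψ^•) and ((R'^•,D'^•),C',Ψ'^•) be dg-entwining structures, T: C ⊗ R^m → k an m-dimensional closed graded entwined trace and T': C' ⊗ R'^n → k an n-dimensional closed graded entwined trace. Define (T ⊗ T') on (C ⊗ C') ⊗ (R ⊗ R')^{m+n} by (T ⊗ T')(c ⊗ c' ⊗ r_i ⊗ r'_j) = T(c ⊗ r_m)T'(c' ⊗ r'_n) on the summand with i = m, j = n, and zero on other summands, where R ⊗ R' carries the graded tensor product dg-algebra structure with (r₁⊗r'₁)(r₂⊗r'₂) = (-1)^{deg(r'₁)deg(r₂)} r₁r₂ ⊗ r'₁r'₂ and (D⊗D')(r⊗r') = Dr ⊗ r' + (-1)^{deg r} r ⊗ D'r'. Then T ⊗ T' is an (m+n)-dimensional closed graded entwined trace on the tensor product dg-entwining structure, with entwining (Ψ ⊗ Ψ')(c ⊗ c' ⊗ r ⊗ r') = r_Ψ ⊗ r'_{Ψ'} ⊗ c^Ψ ⊗ c'^{Ψ'}. -/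
import Mathlib


open TensorProduct

lemma sum_rep_eq {k V W : Type} [Field k] [AddCommGroup V] [Module k V]
    [AddCommGroup W] [Module k W]
    (F : V →ₗ[k] W →ₗ[k] k) {t t' : ℕ} {v : Fin t → V} {w : Fin t → W}
    {v' : Fin t' → V} {w' : Fin t' → W}
    (h : (∑ s, v s ⊗ₜ[k] w s) = ∑ s, v' s ⊗ₜ[k] w' s) :
    ∑ s, F (v s) (w s) = ∑ s, F (v' s) (w' s) := by
  have := congrArg (TensorProduct.lift F) h
  simpa [map_sum] using this

lemma exists_fin_rep {k R C : Type} [Field k] [AddCommGroup R] [Module k R]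
    [AddCommGroup C] [Module k C] (A : Submodule k R) (x : R ⊗[k] C)
    (hx : x ∈ LinearMap.range
      (TensorProduct.map A.subtype (LinearMap.id : C →ₗ[k] C))) :
    ∃ (t : ℕ) (α : Fin t → R) (γ : Fin t → C),
      (∀ s, α s ∈ A) ∧ x = ∑ s, α s ⊗ₜ[k] γ s := by
  obtain ⟨y, rfl⟩ := hx
  induction y with
  | zero => exact ⟨0, ![], ![], by simp, by simp⟩
  | tmul a c => exact ⟨1, ![(a : R)], ![c], by simp, by simp⟩
  | add y₁ y₂ ih₁ ih₂ =>
    obtain ⟨t₁, α₁, γ₁, hα₁, h₁⟩ := ih₁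
    obtain ⟨t₂, α₂, γ₂, hα₂, h₂⟩ := ih₂
    refine ⟨t₁ + t₂, Fin.append α₁ α₂, Fin.append γ₁ γ₂, ?_, ?_⟩
    · intro s
      refine Fin.addCases (fun i => ?_) (fun i => ?_) s
      · simpa [Fin.append_left] using hα₁ i
      · simpa [Fin.append_right] using hα₂ i
    · rw [map_add, h₁, h₂, Fin.sum_univ_add]
      simp [Fin.append_left, Fin.append_right]

lemma sign_eq {k : Type} [Field k] (a b : ℕ) (h : Even (a + b)) :
    ((-1 : k) ^ a) = (-1 : k) ^ b := by
  have h2 := Nat.even_add.mp h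
  by_cases ha : Even a
  · rw [ha.neg_one_pow, (h2.mp ha).neg_one_pow]
  · have hb : ¬ Even b := fun hb => ha (h2.mpr hb)
    rw [(Nat.not_even_iff_odd.mp ha).neg_one_pow,
      (Nat.not_even_iff_odd.mp hb).neg_one_pow]


/-- An entwining structure `(A, C, ψ)` over a field `k`: a unital `k`-algebra `A`,
a counital `k`-coalgebra `C` and a `k`-linear map `ψ : C ⊗ A → A ⊗ C` satisfying the
entwining axioms of Brzeziński–Majid. -/
structure Entwining (k A C : Type) [Field k] [Ring A] [Algebra k A]
    [AddCommGroup C] [Module k C] [Coalgebra k C] : Type where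
  ψ : C ⊗[k] A →ₗ[k] A ⊗[k] C
  mul_compat : ψ ∘ₗ TensorProduct.map (LinearMap.id : C →ₗ[k] C) (LinearMap.mul' k A) =
    TensorProduct.map (LinearMap.mul' k A) (LinearMap.id : C →ₗ[k] C)
      ∘ₗ (TensorProduct.assoc k A A C).symm.toLinearMap
      ∘ₗ TensorProduct.map (LinearMap.id : A →ₗ[k] A) ψ
      ∘ₗ (TensorProduct.assoc k A C A).toLinearMap
      ∘ₗ TensorProduct.map ψ (LinearMap.id : A →ₗ[k] A)
      ∘ₗ (TensorProduct.assoc k C A A).symm.toLinearMap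
  comul_compat : TensorProduct.map (LinearMap.id : A →ₗ[k] A)
        (CoalgebraStruct.comul (R := k) (A := C)) ∘ₗ ψ =
    (TensorProduct.assoc k A C C).toLinearMap
      ∘ₗ TensorProduct.map ψ (LinearMap.id : C →ₗ[k] C)
      ∘ₗ (TensorProduct.assoc k C A C).symm.toLinearMap
      ∘ₗ TensorProduct.map (LinearMap.id : C →ₗ[k] C) ψ
      ∘ₗ (TensorProduct.assoc k C C A).toLinearMap
      ∘ₗ TensorProduct.map (CoalgebraStruct.comul (R := k) (A := C)) (LinearMap.id : A →ₗ[k] A)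
  counit_compat : (TensorProduct.rid k A).toLinearMap
      ∘ₗ TensorProduct.map (LinearMap.id : A →ₗ[k] A)
        (CoalgebraStruct.counit (R := k) (A := C)) ∘ₗ ψ =
    (TensorProduct.lid k A).toLinearMap
      ∘ₗ TensorProduct.map (CoalgebraStruct.counit (R := k) (A := C)) (LinearMap.id : A →ₗ[k] A)
  unit_compat : ∀ c : C, ψ (c ⊗ₜ[k] (1 : A)) = (1 : A) ⊗ₜ[k] c

/-- An entwining structure with a possibly non-unital algebra `R`: all the axioms of an
entwining structure except the unitality axiom `ψ(c ⊗ 1) = 1 ⊗ c`. -/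
structure NEntwining (k R C : Type) [Field k] [NonUnitalRing R] [Module k R]
    [SMulCommClass k R R] [IsScalarTower k R R]
    [AddCommGroup C] [Module k C] [Coalgebra k C] : Type where
  ψ : C ⊗[k] R →ₗ[k] R ⊗[k] C
  mul_compat : ψ ∘ₗ TensorProduct.map (LinearMap.id : C →ₗ[k] C) (LinearMap.mul' k R) =
    TensorProduct.map (LinearMap.mul' k R) (LinearMap.id : C →ₗ[k] C)
      ∘ₗ (TensorProduct.assoc k R R C).symm.toLinearMap
      ∘ₗ TensorProduct.map (LinearMap.id : R →ₗ[k] R) ψ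
      ∘ₗ (TensorProduct.assoc k R C R).toLinearMap
      ∘ₗ TensorProduct.map ψ (LinearMap.id : R →ₗ[k] R)
      ∘ₗ (TensorProduct.assoc k C R R).symm.toLinearMap
  comul_compat : TensorProduct.map (LinearMap.id : R →ₗ[k] R)
        (CoalgebraStruct.comul (R := k) (A := C)) ∘ₗ ψ =
    (TensorProduct.assoc k R C C).toLinearMap
      ∘ₗ TensorProduct.map ψ (LinearMap.id : C →ₗ[k] C)
      ∘ₗ (TensorProduct.assoc k C R C).symm.toLinearMap
      ∘ₗ TensorProduct.map (LinearMap.id : C →ₗ[k] C) ψ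
      ∘ₗ (TensorProduct.assoc k C C R).toLinearMap
      ∘ₗ TensorProduct.map (CoalgebraStruct.comul (R := k) (A := C)) (LinearMap.id : R →ₗ[k] R)
  counit_compat : (TensorProduct.rid k R).toLinearMap
      ∘ₗ TensorProduct.map (LinearMap.id : R →ₗ[k] R)
        (CoalgebraStruct.counit (R := k) (A := C)) ∘ₗ ψ =
    (TensorProduct.lid k R).toLinearMap
      ∘ₗ TensorProduct.map (CoalgebraStruct.counit (R := k) (A := C)) (LinearMap.id : R →ₗ[k] R)

/-- If `T` is an `m`-dimensional and `T'` an `n`-dimensional closed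
graded entwined trace on dg-entwining structures `((R,D),C,Ψ)` and `((R',D'),C',Ψ')`,
then `T ⊗ T'` — defined on `(C ⊗ C') ⊗ (R ⊗ R')` by
`(T ⊗ T')((c ⊗ c') ⊗ (r ⊗ r')) = T(c ⊗ r) T'(c' ⊗ r')` for `r` of degree `m`, `r'` of
degree `n`, and `0` on homogeneous components of other bidegrees — is an
`(m+n)`-dimensional closed graded entwined trace on the graded tensor product
dg-entwining structure (with product `(r₁ ⊗ r'₁)(r₂ ⊗ r'₂) =
(-1)^{deg r'₁ · deg r₂} (r₁r₂ ⊗ r'₁r'₂)`, differential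
`(D ⊗ D')(r ⊗ r') = Dr ⊗ r' + (-1)^{deg r} r ⊗ D'r'`, and entwining
`(Ψ ⊗ Ψ')((c ⊗ c') ⊗ (r ⊗ r')) = (r_Ψ ⊗ r'_{Ψ'}) ⊗ (c^Ψ ⊗ c'^{Ψ'})`). -/
theorem tensor_graded_trace
    {k C C' R R' : Type}
    [Field k] [AddCommGroup C] [Module k C] [Coalgebra k C]
    [AddCommGroup C'] [Module k C'] [Coalgebra k C']
    [NonUnitalRing R] [Module k R] [SMulCommClass k R R] [IsScalarTower k R R]
    [NonUnitalRing R'] [Module k R'] [SMulCommClass k R' R'] [IsScalarTower k R' R']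
    (E : NEntwining k R C) (E' : NEntwining k R' C')
    (𝒜 : ℕ → Submodule k R) (𝒜' : ℕ → Submodule k R')
    (hmul : ∀ (i j : ℕ) (x y : R), x ∈ 𝒜 i → y ∈ 𝒜 j → x * y ∈ 𝒜 (i + j))
    (hmul' : ∀ (i j : ℕ) (x y : R'), x ∈ 𝒜' i → y ∈ 𝒜' j → x * y ∈ 𝒜' (i + j))
    (D : R →ₗ[k] R) (D' : R' →ₗ[k] R')
    (hDdeg : ∀ (i : ℕ) (x : R), x ∈ 𝒜 i → D x ∈ 𝒜 (i + 1))
    (hDdeg' : ∀ (i : ℕ) (x : R'), x ∈ 𝒜' i → D' x ∈ 𝒜' (i + 1))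
    (hDD : D ∘ₗ D = 0) (hDD' : D' ∘ₗ D' = 0)
    (hLeibniz : ∀ (i : ℕ) (x : R), x ∈ 𝒜 i → ∀ y : R,
      D (x * y) = D x * y + ((-1 : k) ^ i) • (x * D y))
    (hLeibniz' : ∀ (i : ℕ) (x : R'), x ∈ 𝒜' i → ∀ y : R',
      D' (x * y) = D' x * y + ((-1 : k) ^ i) • (x * D' y))
    (hchain : TensorProduct.map D (LinearMap.id : C →ₗ[k] C) ∘ₗ E.ψ =
      E.ψ ∘ₗ TensorProduct.map (LinearMap.id : C →ₗ[k] C) D)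
    (hchain' : TensorProduct.map D' (LinearMap.id : C' →ₗ[k] C') ∘ₗ E'.ψ =
      E'.ψ ∘ₗ TensorProduct.map (LinearMap.id : C' →ₗ[k] C') D')
    (hdeg0 : ∀ (i : ℕ) (c : C) (r : R), r ∈ 𝒜 i →
      E.ψ (c ⊗ₜ[k] r) ∈ LinearMap.range
        (TensorProduct.map (𝒜 i).subtype (LinearMap.id : C →ₗ[k] C)))
    (hdeg0' : ∀ (i : ℕ) (c : C') (r : R'), r ∈ 𝒜' i →
      E'.ψ (c ⊗ₜ[k] r) ∈ LinearMap.range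
        (TensorProduct.map (𝒜' i).subtype (LinearMap.id : C' →ₗ[k] C')))
    (m n : ℕ) (T : C ⊗[k] R →ₗ[k] k) (T' : C' ⊗[k] R' →ₗ[k] k)
    (hclosed : ∀ (a : ℕ), a + 1 = m → ∀ (c : C) (r : R), r ∈ 𝒜 a → T (c ⊗ₜ[k] D r) = 0)
    (hclosed' : ∀ (b : ℕ), b + 1 = n → ∀ (c : C') (r : R'), r ∈ 𝒜' b →
      T' (c ⊗ₜ[k] D' r) = 0)
    (htrace : ∀ (i j : ℕ), i + j = m → ∀ (r' r'' : R), r' ∈ 𝒜 i → r'' ∈ 𝒜 j →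
      ∀ (c : C) (t : ℕ) (α : Fin t → R) (γ : Fin t → C),
        E.ψ (c ⊗ₜ[k] r') = ∑ s, α s ⊗ₜ[k] γ s →
        T (c ⊗ₜ[k] (r' * r'')) = (-1 : k) ^ (i * j) * ∑ s, T (γ s ⊗ₜ[k] (r'' * α s)))
    (htrace' : ∀ (i j : ℕ), i + j = n → ∀ (r' r'' : R'), r' ∈ 𝒜' i → r'' ∈ 𝒜' j →
      ∀ (c : C') (t : ℕ) (α : Fin t → R') (γ : Fin t → C'),
        E'.ψ (c ⊗ₜ[k] r') = ∑ s, α s ⊗ₜ[k] γ s →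
        T' (c ⊗ₜ[k] (r' * r'')) = (-1 : k) ^ (i * j) * ∑ s, T' (γ s ⊗ₜ[k] (r'' * α s)))
    (TT : (C ⊗[k] C') ⊗[k] (R ⊗[k] R') →ₗ[k] k)
    (hTT : ∀ (a b : ℕ) (r : R) (r' : R'), r ∈ 𝒜 a → r' ∈ 𝒜' b → ∀ (c : C) (c' : C'),
      TT ((c ⊗ₜ[k] c') ⊗ₜ[k] (r ⊗ₜ[k] r')) =
        if a = m ∧ b = n then T (c ⊗ₜ[k] r) * T' (c' ⊗ₜ[k] r') else 0) :
    -- `T ⊗ T'` is closed: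
    (∀ (a b : ℕ), a + b + 1 = m + n → ∀ (r : R) (r' : R'), r ∈ 𝒜 a → r' ∈ 𝒜' b →
      ∀ (c : C) (c' : C'),
        TT ((c ⊗ₜ[k] c') ⊗ₜ[k] (D r ⊗ₜ[k] r' + (-1 : k) ^ a • (r ⊗ₜ[k] D' r'))) = 0) ∧
    -- `T ⊗ T'` satisfies the graded entwined trace condition:
    (∀ (i₁ j₁ i₂ j₂ : ℕ), (i₁ + j₁) + (i₂ + j₂) = m + n →
      ∀ (r₁ r₂ : R) (r'₁ r'₂ : R'), r₁ ∈ 𝒜 i₁ → r'₁ ∈ 𝒜' j₁ → r₂ ∈ 𝒜 i₂ → r'₂ ∈ 𝒜' j₂ →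
      ∀ (c : C) (c' : C') (t : ℕ) (α : Fin t → R) (γ : Fin t → C)
        (t' : ℕ) (α' : Fin t' → R') (γ' : Fin t' → C'),
        E.ψ (c ⊗ₜ[k] r₁) = ∑ s, α s ⊗ₜ[k] γ s →
        E'.ψ (c' ⊗ₜ[k] r'₁) = ∑ u, α' u ⊗ₜ[k] γ' u →
        (-1 : k) ^ (j₁ * i₂) * TT ((c ⊗ₜ[k] c') ⊗ₜ[k] ((r₁ * r₂) ⊗ₜ[k] (r'₁ * r'₂))) =
          (-1 : k) ^ ((i₁ + j₁) * (i₂ + j₂)) * ((-1 : k) ^ (j₂ * i₁) *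
            ∑ s, ∑ u, TT ((γ s ⊗ₜ[k] γ' u) ⊗ₜ[k] ((r₂ * α s) ⊗ₜ[k] (r'₂ * α' u))))) := by
  constructor
  · intro a b hab r r' hr hr' c c'
    have h1 : TT ((c ⊗ₜ[k] c') ⊗ₜ[k] (D r ⊗ₜ[k] r')) = 0 := by
      rw [hTT (a+1) b (D r) r' (hDdeg a r hr) hr' c c']
      split_ifs with h
      · rw [hclosed a h.1 c r hr, zero_mul]
      · rfl
    have h2 : TT ((c ⊗ₜ[k] c') ⊗ₜ[k] (r ⊗ₜ[k] D' r')) = 0 := by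
      rw [hTT a (b+1) r (D' r') hr (hDdeg' b r' hr') c c']
      split_ifs with h
      · rw [hclosed' b h.2 c' r' hr', mul_zero]
      · rfl
    simp [tmul_add, tmul_smul, h1, h2]
  · intro i₁ j₁ i₂ j₂ hdim r₁ r₂ r'₁ r'₂ hm1 hm1' hm2 hm2' c c' t α γ t' α' γ' hα hα'
    obtain ⟨t₀, β, δ, hβ, hrep⟩ := exists_fin_rep (𝒜 i₁) _ (hdeg0 i₁ c r₁ hm1)
    obtain ⟨t₀', β', δ', hβ', hrep'⟩ := exists_fin_rep (𝒜' j₁) _ (hdeg0' j₁ c' r'₁ hm1')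
    have step1 : ∀ (x' : R') (c₀ : C'),
        (∑ s, TT ((γ s ⊗ₜ[k] c₀) ⊗ₜ[k] ((r₂ * α s) ⊗ₜ[k] x')))
          = ∑ s, TT ((δ s ⊗ₜ[k] c₀) ⊗ₜ[k] ((r₂ * β s) ⊗ₜ[k] x')) := by
      intro x' c₀
      exact sum_rep_eq (LinearMap.mk₂ k
        (fun av gv => TT ((gv ⊗ₜ[k] c₀) ⊗ₜ[k] ((r₂ * av) ⊗ₜ[k] x')))
        (by intros; simp [mul_add, add_tmul, tmul_add])
        (by intros; simp only [mul_smul_comm, tmul_smul, ← smul_tmul', map_smul, smul_eq_mul])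
        (by intros; simp [add_tmul, tmul_add])
        (by intros; simp only [mul_smul_comm, tmul_smul, ← smul_tmul', map_smul, smul_eq_mul]))
        (hα.symm.trans hrep)
    have step2 : ∀ (x : R) (c₀ : C),
        (∑ u, TT ((c₀ ⊗ₜ[k] γ' u) ⊗ₜ[k] (x ⊗ₜ[k] (r'₂ * α' u))))
          = ∑ u, TT ((c₀ ⊗ₜ[k] δ' u) ⊗ₜ[k] (x ⊗ₜ[k] (r'₂ * β' u))) := by
      intro x c₀
      exact sum_rep_eq (LinearMap.mk₂ k
        (fun av gv => TT ((c₀ ⊗ₜ[k] gv) ⊗ₜ[k] (x ⊗ₜ[k] (r'₂ * av))))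
        (by intros; simp [mul_add, add_tmul, tmul_add])
        (by intros; simp only [mul_smul_comm, tmul_smul, ← smul_tmul', map_smul, smul_eq_mul])
        (by intros; simp [add_tmul, tmul_add])
        (by intros; simp only [mul_smul_comm, tmul_smul, ← smul_tmul', map_smul, smul_eq_mul]))
        (hα'.symm.trans hrep')
    have hswap : (∑ s, ∑ u, TT ((γ s ⊗ₜ[k] γ' u) ⊗ₜ[k] ((r₂ * α s) ⊗ₜ[k] (r'₂ * α' u))))
        = ∑ s, ∑ u, TT ((δ s ⊗ₜ[k] δ' u) ⊗ₜ[k] ((r₂ * β s) ⊗ₜ[k] (r'₂ * β' u))) := by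
      calc (∑ s, ∑ u, TT ((γ s ⊗ₜ[k] γ' u) ⊗ₜ[k] ((r₂ * α s) ⊗ₜ[k] (r'₂ * α' u))))
          = ∑ s, ∑ u, TT ((γ s ⊗ₜ[k] δ' u) ⊗ₜ[k] ((r₂ * α s) ⊗ₜ[k] (r'₂ * β' u))) :=
            Finset.sum_congr rfl (fun s _ => step2 _ _)
        _ = ∑ u, ∑ s, TT ((γ s ⊗ₜ[k] δ' u) ⊗ₜ[k] ((r₂ * α s) ⊗ₜ[k] (r'₂ * β' u))) :=
            Finset.sum_comm
        _ = ∑ u, ∑ s, TT ((δ s ⊗ₜ[k] δ' u) ⊗ₜ[k] ((r₂ * β s) ⊗ₜ[k] (r'₂ * β' u))) :=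
            Finset.sum_congr rfl (fun u _ => step1 _ _)
        _ = ∑ s, ∑ u, TT ((δ s ⊗ₜ[k] δ' u) ⊗ₜ[k] ((r₂ * β s) ⊗ₜ[k] (r'₂ * β' u))) :=
            Finset.sum_comm
    rw [hswap]
    have hL : TT ((c ⊗ₜ[k] c') ⊗ₜ[k] ((r₁ * r₂) ⊗ₜ[k] (r'₁ * r'₂)))
        = if i₁ + i₂ = m ∧ j₁ + j₂ = n
            then T (c ⊗ₜ[k] (r₁ * r₂)) * T' (c' ⊗ₜ[k] (r'₁ * r'₂)) else 0 :=
      hTT _ _ _ _ (hmul _ _ _ _ hm1 hm2) (hmul' _ _ _ _ hm1' hm2') c c'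
    have hR : ∀ s u, TT ((δ s ⊗ₜ[k] δ' u) ⊗ₜ[k] ((r₂ * β s) ⊗ₜ[k] (r'₂ * β' u)))
        = if i₂ + i₁ = m ∧ j₂ + j₁ = n
            then T (δ s ⊗ₜ[k] (r₂ * β s)) * T' (δ' u ⊗ₜ[k] (r'₂ * β' u)) else 0 :=
      fun s u => hTT _ _ _ _ (hmul _ _ _ _ hm2 (hβ s)) (hmul' _ _ _ _ hm2' (hβ' u)) _ _
    rw [hL]
    simp only [hR]
    by_cases hc : i₁ + i₂ = m ∧ j₁ + j₂ = n
    · rw [if_pos hc]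
      have hc' : i₂ + i₁ = m ∧ j₂ + j₁ = n := by omega
      simp only [if_pos hc']
      rw [htrace i₁ i₂ hc.1 r₁ r₂ hm1 hm2 c t₀ β δ hrep,
        htrace' j₁ j₂ hc.2 r'₁ r'₂ hm1' hm2' c' t₀' β' δ' hrep']
      have hsum : (∑ s, ∑ u, T (δ s ⊗ₜ[k] (r₂ * β s)) * T' (δ' u ⊗ₜ[k] (r'₂ * β' u)))
          = (∑ s, T (δ s ⊗ₜ[k] (r₂ * β s))) * (∑ u, T' (δ' u ⊗ₜ[k] (r'₂ * β' u))) := by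
        rw [Finset.sum_mul_sum]
      rw [hsum]
      have hsign : ((-1 : k) ^ (j₁ * i₂) * (-1 : k) ^ (i₁ * i₂) * (-1 : k) ^ (j₁ * j₂))
          = (-1 : k) ^ ((i₁ + j₁) * (i₂ + j₂)) * (-1 : k) ^ (j₂ * i₁) := by
        rw [← pow_add, ← pow_add, ← pow_add]
        exact sign_eq _ _ ⟨i₁ * i₂ + j₁ * i₂ + j₁ * j₂ + i₁ * j₂, by ring⟩
      linear_combination ((∑ s, T (δ s ⊗ₜ[k] (r₂ * β s))) *
        (∑ u, T' (δ' u ⊗ₜ[k] (r'₂ * β' u)))) * hsign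
    · rw [if_neg hc]
      have hc' : ¬(i₂ + i₁ = m ∧ j₂ + j₁ = n) := by omega
      simp [hc']
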